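/- Let G be a finite simple graph that is claw-free and co-claw-free and such that both G and its complement are connected. If G contains an induced path on 6 vertices, then G is a path (on at least 6 vertices) or a cycle (on at least 7 vertices). -/

import Mathlib

/-!
If `v₀ … v₅` is an induced `P₆`, a vertex seeing both ends of a path edge is forced by
co-claw-freeness to see the path vertices far from that edge as well, and then three of its path
neighbours form a claw. So every vertex sees at most two path vertices, none of them adjacent.
A triangle would have to see all six path vertices, at most two per corner, hence disjointly,
and one corner with its two path neighbours and a second corner is again a claw. Claw-free and
triangle-free means maximum degree two, so the connected graph is a path or a cycle, read off a
longest path. It has at least six vertices, and `C₆` has no induced `P₆`.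
-/

open SimpleGraph Finset

/-- The claw `K_{1,3}`. -/
def claw : SimpleGraph (Fin 1 ⊕ Fin 3) := completeBipartiteGraph (Fin 1) (Fin 3)

namespace SimpleGraph

instance (n : ℕ) : DecidableRel (pathGraph n).Adj :=
  fun _ _ => decidable_of_iff _ pathGraph_adj.symm

theorem cycleGraph_adj_iff_pathGraph_adj {n : ℕ} (hn : 2 ≤ n) {a b : Fin n} :
    (cycleGraph n).Adj a b ↔
      (pathGraph n).Adj a b ∨ a.val = 0 ∧ b.val + 1 = n ∨ b.val = 0 ∧ a.val + 1 = n := by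
  have hsub (x y : Fin n) : (x - y).val = if y.val ≤ x.val then x.val - y.val else n + x - y := by
    have := x.isLt
    rw [Fin.val_sub]
    split_ifs with h
    · rw [show n - y + x = x - y + n by omega, Nat.add_mod_right, Nat.mod_eq_of_lt (by omega)]
    · rw [Nat.mod_eq_of_lt (by omega : n - y + x < n)]
      omega
  have := a.isLt
  have := b.isLt
  rw [cycleGraph_adj', pathGraph_adj, hsub, hsub]
  split_ifs <;> omega

theorem not_nonempty_pathGraph_six_embedding_cycleGraph_six :
    ¬ Nonempty (pathGraph 6 ↪g cycleGraph 6) := by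
  rintro ⟨e⟩
  have hsurj : Function.Surjective e := Finite.surjective_of_injective e.injective
  obtain ⟨a, ha⟩ := hsurj (e 0 + 1)
  obtain ⟨b, hb⟩ := hsurj (e 0 - 1)
  have hcyc : ∀ x : Fin 6, (cycleGraph 6).Adj x (x + 1) ∧ (cycleGraph 6).Adj x (x - 1) ∧
      x + 1 ≠ x - 1 := by decide
  have hpath : ∀ a b : Fin 6, (pathGraph 6).Adj 0 a → (pathGraph 6).Adj 0 b → a = b := by decide
  have hab := hpath a b (e.map_adj_iff.1 (ha ▸ (hcyc _).1)) (e.map_adj_iff.1 (hb ▸ (hcyc _).2.1))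
  exact (hcyc (e 0)).2.2 (ha ▸ hb ▸ congrArg e hab)

variable {V : Type} {G : SimpleGraph V}

theorem adj_of_clawFree (hclaw : ¬ Nonempty (claw ↪g G)) {t x y z : V}
    (hx : G.Adj t x) (hy : G.Adj t y) (hz : G.Adj t z) (hxy : x ≠ y) (hxz : x ≠ z) (hyz : y ≠ z) :
    G.Adj x y ∨ G.Adj x z ∨ G.Adj y z := by
  by_contra! h
  obtain ⟨h₁, h₂, h₃⟩ := h
  let φ : Fin 1 ⊕ Fin 3 → V := Sum.elim (fun _ => t) ![x, y, z]
  have hφ : ∀ a b, G.Adj (φ a) (φ b) ↔ claw.Adj a b := by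
    rintro (a | a) (b | b) <;> fin_cases a <;> fin_cases b <;> simp_all [φ, claw, G.adj_comm]
  have hinj : φ.Injective := by
    rintro (a | a) (b | b) hab <;> fin_cases a <;> fin_cases b <;>
      simp_all [φ, hx.ne, hy.ne, hz.ne, hx.ne', hy.ne', hz.ne']
  exact hclaw ⟨⟨⟨φ, hinj⟩, hφ _ _⟩⟩

theorem adj_of_coclawFree (hcoclaw : ¬ Nonempty (clawᶜ ↪g G)) {a b c x : V}
    (hab : G.Adj a b) (hac : G.Adj a c) (hbc : G.Adj b c)
    (hxa : x ≠ a) (hxb : x ≠ b) (hxc : x ≠ c) :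
    G.Adj x a ∨ G.Adj x b ∨ G.Adj x c := by
  by_contra! h
  obtain ⟨h₁, h₂, h₃⟩ := h
  have hclawc : ¬ Nonempty (claw ↪g Gᶜ) := fun ⟨e⟩ =>
    hcoclaw ⟨Embedding.complEquiv.symm (by simpa using e)⟩
  have := adj_of_clawFree hclawc (t := x) (x := a) (y := b) (z := c)
    (by simp [hxa, h₁]) (by simp [hxb, h₂]) (by simp [hxc, h₃]) hab.ne hac.ne hbc.ne
  simp_all

theorem not_adj_of_adj_of_pathGraph_six_embedding (hclaw : ¬ Nonempty (claw ↪g G))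
    (hcoclaw : ¬ Nonempty (clawᶜ ↪g G)) (f : pathGraph 6 ↪g G) {t : V} {i j : Fin 6}
    (hij : (pathGraph 6).Adj i j) (hi : G.Adj t (f i)) : ¬ G.Adj t (f j) := by
  intro hj
  have hoff : ∀ k, f k ≠ t := by
    rintro k rfl
    rw [f.map_adj_iff, pathGraph_adj] at hi hj
    rw [pathGraph_adj] at hij
    omega
  have hfar : ∀ {a b : Fin 6} (k : Fin 6), (pathGraph 6).Adj a b →
      k ≠ a ∧ k ≠ b ∧ ¬ (pathGraph 6).Adj k a ∧ ¬ (pathGraph 6).Adj k b →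
      G.Adj t (f a) → G.Adj t (f b) → G.Adj t (f k) := by
    rintro a b k hab ⟨hka, hkb, hnka, hnkb⟩ ha hb
    rcases adj_of_coclawFree hcoclaw ha hb (f.map_adj_iff.2 hab) (hoff k)
      (f.injective.ne hka) (f.injective.ne hkb) with h | h | h
    · exact h.symm
    · exact absurd (f.map_adj_iff.1 h) hnka
    · exact absurd (f.map_adj_iff.1 h) hnkb
  have hindep : ∀ a b c : Fin 6, a ≠ b ∧ a ≠ c ∧ b ≠ c ∧ ¬ (pathGraph 6).Adj a b ∧
      ¬ (pathGraph 6).Adj a c ∧ ¬ (pathGraph 6).Adj b c →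
      G.Adj t (f a) → G.Adj t (f b) → G.Adj t (f c) → False := by
    rintro a b c ⟨hab, hac, hbc, h₁, h₂, h₃⟩ ha hb hc
    simpa [h₁, h₂, h₃] using adj_of_clawFree hclaw ha hb hc
      (f.injective.ne hab) (f.injective.ne hac) (f.injective.ne hbc)
  wlog hlt : i < j generalizing i j
  · exact this hij.symm hj hi (lt_of_le_of_ne (not_lt.1 hlt) (hij.ne'))
  fin_cases i <;> fin_cases j <;> try exact absurd hij (by decide)
  all_goals try exact absurd hlt (by decide)
  · exact hindep 0 3 5 (by decide) hi (hfar 3 hij (by decide) hi hj)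
      (hfar 5 hij (by decide) hi hj)
  · have h₄ := hfar 4 hij (by decide) hi hj
    have h₅ := hfar 5 hij (by decide) hi hj
    exact hindep 0 2 4 (by decide) (hfar 0 (by decide) (by decide) h₄ h₅) hj h₄
  · exact hindep 0 2 5 (by decide) (hfar 0 hij (by decide) hi hj) hi
      (hfar 5 hij (by decide) hi hj)
  · have h₀ := hfar 0 hij (by decide) hi hj
    have h₁ := hfar 1 hij (by decide) hi hj
    exact hindep 1 3 5 (by decide) h₁ hi (hfar 5 (by decide) (by decide) h₀ h₁)
  · exact hindep 0 2 4 (by decide) (hfar 0 hij (by decide) hi hj)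
      (hfar 2 hij (by decide) hi hj) hi

theorem card_filter_adj_pathGraph_six_embedding_le_two [DecidableRel G.Adj]
    (hclaw : ¬ Nonempty (claw ↪g G)) (hcoclaw : ¬ Nonempty (clawᶜ ↪g G))
    (f : pathGraph 6 ↪g G) (t : V) : #{k | G.Adj t (f k)} ≤ 2 := by
  by_contra! h
  obtain ⟨a, ha, b, hb, c, hc, hab, hac, hbc⟩ := two_lt_card.1 h
  simp only [mem_filter, mem_univ, true_and] at ha hb hc
  have hE {i j : Fin 6} (hij : G.Adj (f i) (f j)) (hi : G.Adj t (f i)) : ¬ G.Adj t (f j) :=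
    not_adj_of_adj_of_pathGraph_six_embedding hclaw hcoclaw f (f.map_adj_iff.1 hij) hi
  rcases adj_of_clawFree hclaw ha hb hc (f.injective.ne hab) (f.injective.ne hac)
    (f.injective.ne hbc) with h | h | h
  exacts [hE h ha hb, hE h ha hc, hE h hb hc]

theorem cliqueFree_three_of_pathGraph_six_embedding (hclaw : ¬ Nonempty (claw ↪g G))
    (hcoclaw : ¬ Nonempty (clawᶜ ↪g G)) (f : pathGraph 6 ↪g G) : G.CliqueFree 3 := by
  classical
  intro s hs
  obtain ⟨a, b, c, hab, hac, hbc, rfl⟩ := is3Clique_iff.1 hs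
  set N : V → Finset (Fin 6) := fun v => {k | G.Adj v (f k)} with hN
  have hmem {v : V} {k : Fin 6} : k ∈ N v ↔ G.Adj v (f k) := by simp [hN]
  have hcover : ∀ k, k ∈ N a ∪ (N b ∪ N c) := by
    intro k
    simp only [mem_union, hmem]
    by_cases hka : f k = a
    · exact Or.inr (Or.inl (hka ▸ hab.symm))
    by_cases hkb : f k = b
    · exact Or.inl (hkb ▸ hab)
    by_cases hkc : f k = c
    · exact Or.inl (hkc ▸ hac)
    rcases adj_of_coclawFree hcoclaw hab hac hbc hka hkb hkc with h | h | h
    exacts [Or.inl h.symm, Or.inr (Or.inl h.symm), Or.inr (Or.inr h.symm)]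
  have hsix : #(N a ∪ (N b ∪ N c)) = 6 := by
    rw [eq_univ_of_forall hcover, card_univ, Fintype.card_fin]
  have hle := card_filter_adj_pathGraph_six_embedding_le_two hclaw hcoclaw f
  have h₁ := card_union_add_card_inter (N a) (N b ∪ N c)
  have h₂ := card_union_le (N b) (N c)
  have hcard : #(N a) = 2 := by linarith [hle a, hle b, hle c]
  have hdisj : Disjoint (N a) (N b ∪ N c) := by
    rw [disjoint_iff_inter_eq_empty, ← card_eq_zero]
    linarith [hle a, hle b, hle c]
  obtain ⟨x, y, hxy, hNa⟩ := card_eq_two.1 hcard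
  have hx : G.Adj a (f x) := hmem.1 (by simp [hNa])
  have hy : G.Adj a (f y) := hmem.1 (by simp [hNa])
  have hout {k : Fin 6} (hk : G.Adj a (f k)) : ¬ G.Adj b (f k) ∧ ¬ G.Adj c (f k) := by
    simpa [hmem] using Finset.disjoint_left.1 hdisj (hmem.2 hk)
  have hne {k : Fin 6} (hk : G.Adj a (f k)) : f k ≠ b := fun h => (hout hk).2 (h ▸ hbc.symm)
  rcases adj_of_clawFree hclaw hx hy hab (f.injective.ne hxy) (hne hx) (hne hy) with h | h | h
  · exact not_adj_of_adj_of_pathGraph_six_embedding hclaw hcoclaw f (f.map_adj_iff.1 h) hx hy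
  · exact (hout hx).1 h.symm
  · exact (hout hy).1 h.symm

-- `G.maxDegree ≤ 2`, phrased without finiteness instances.
def MaxDegreeLeTwo (G : SimpleGraph V) : Prop :=
  ∀ ⦃v x y z : V⦄, G.Adj v x → G.Adj v y → G.Adj v z → x = y ∨ x = z ∨ y = z

theorem maxDegreeLeTwo_of_cliqueFree_three (hclaw : ¬ Nonempty (claw ↪g G))
    (htri : G.CliqueFree 3) : G.MaxDegreeLeTwo := by
  classical
  intro v x y z hx hy hz
  by_contra! h
  obtain ⟨hxy, hxz, hyz⟩ := h
  rcases adj_of_clawFree hclaw hx hy hz hxy hxz hyz with h | h | h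
  · exact htri {v, x, y} (is3Clique_triple_iff.2 ⟨hx, hy, h⟩)
  · exact htri {v, x, z} (is3Clique_triple_iff.2 ⟨hx, hz, h⟩)
  · exact htri {v, y, z} (is3Clique_triple_iff.2 ⟨hy, hz, h⟩)

namespace Walk

variable {u v : V} {p : G.Walk u v}

theorem IsPath.eq_getVert_pred_or_succ_of_adj (hdeg : G.MaxDegreeLeTwo) (hp : p.IsPath) {m : ℕ}
    (h0 : 0 < m) (hm : m < p.length) {w : V} (hw : G.Adj (p.getVert m) w) :
    w = p.getVert (m - 1) ∨ w = p.getVert (m + 1) := by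
  have hpred : G.Adj (p.getVert m) (p.getVert (m - 1)) := by
    simpa [Nat.sub_add_cancel h0] using (p.adj_getVert_succ (i := m - 1) (by omega)).symm
  have hne : p.getVert (m - 1) ≠ p.getVert (m + 1) := fun h => by
    have : m - 1 = m + 1 := hp.getVert_injOn (by grind) (by grind) h
    omega
  rcases hdeg hpred (p.adj_getVert_succ hm) hw with h | h | h
  exacts [absurd h hne, Or.inl h.symm, Or.inr h.symm]

theorem IsPath.eq_add_one_or_of_adj_getVert (hdeg : G.MaxDegreeLeTwo) (hp : p.IsPath) {i j : ℕ}
    (hij : i < j) (hj : j ≤ p.length) (h : G.Adj (p.getVert i) (p.getVert j)) :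
    j = i + 1 ∨ i = 0 ∧ j = p.length := by
  have hinj {a b : ℕ} (ha : a ≤ p.length) (hb : b ≤ p.length) (h : p.getVert a = p.getVert b) :
      a = b := hp.getVert_injOn ha hb h
  rcases Nat.eq_zero_or_pos i with rfl | h0
  · rcases hj.lt_or_eq with hj | rfl
    · rcases hp.eq_getVert_pred_or_succ_of_adj hdeg (by omega) hj h.symm with h' | h'
      · have := hinj (by omega) (by omega) h'
        omega
      · have := hinj (by omega) (by omega) h'
        omega
    · exact Or.inr ⟨rfl, rfl⟩
  · rcases hp.eq_getVert_pred_or_succ_of_adj hdeg h0 (by omega) h with h' | h'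
    · have := hinj hj (by omega) h'
      omega
    · exact Or.inl (hinj hj (by omega) h')

theorem IsPath.adj_getVert_iff (hdeg : G.MaxDegreeLeTwo) (hp : p.IsPath) {i j : ℕ}
    (hi : i ≤ p.length) (hj : j ≤ p.length) :
    G.Adj (p.getVert i) (p.getVert j) ↔
      i + 1 = j ∨ j + 1 = i ∨ G.Adj u v ∧ (i = 0 ∧ j = p.length ∨ j = 0 ∧ i = p.length) := by
  constructor
  · intro h
    rcases lt_trichotomy i j with hij | rfl | hij
    · rcases hp.eq_add_one_or_of_adj_getVert hdeg hij hj h with h' | ⟨rfl, rfl⟩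
      · exact Or.inl h'.symm
      · exact Or.inr (Or.inr ⟨by simpa using h, Or.inl ⟨rfl, rfl⟩⟩)
    · exact absurd h (G.irrefl)
    · rcases hp.eq_add_one_or_of_adj_getVert hdeg hij hi h.symm with h' | ⟨rfl, rfl⟩
      · exact Or.inr (Or.inl h'.symm)
      · exact Or.inr (Or.inr ⟨by simpa using h.symm, Or.inr ⟨rfl, rfl⟩⟩)
  · rintro (rfl | rfl | ⟨huv, ⟨rfl, rfl⟩ | ⟨rfl, rfl⟩⟩)
    · exact p.adj_getVert_succ (by omega)
    · exact (p.adj_getVert_succ (by omega)).symm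
    · simpa using huv
    · simpa using huv.symm

theorem IsPath.mem_support_of_forall_length_le (hconn : G.Connected) (hdeg : G.MaxDegreeLeTwo)
    (hp : p.IsPath) (hmax : ∀ a b (q : G.Walk a b), q.IsPath → q.length ≤ p.length) (w : V) :
    w ∈ p.support := by
  by_contra hw
  obtain ⟨d, -, hd, hd'⟩ := (hconn.preconnected u w).some.exists_boundary_dart
    {z | z ∈ p.support} p.start_mem_support hw
  obtain ⟨i, hi, hil⟩ := mem_support_iff_exists_getVert.1 hd
  have hadj : G.Adj (p.getVert i) d.snd := hi ▸ d.adj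
  rcases Nat.eq_zero_or_pos i with rfl | h0
  · have hu : G.Adj d.snd u := by simpa using hadj.symm
    have := hmax _ _ (p.cons hu) (hp.cons hd')
    simp at this
  rcases hil.lt_or_eq with hlt | rfl
  · rcases hp.eq_getVert_pred_or_succ_of_adj hdeg h0 hlt hadj with h | h <;>
      exact hd' (h ▸ p.getVert_mem_support _)
  · have hv : G.Adj v d.snd := by simpa using hadj
    have := hmax _ _ (p.concat hv) (hp.concat hd' hv)
    simp at this

theorem IsPath.getVert_bijective (hp : p.IsPath) (hspan : ∀ w, w ∈ p.support) :
    Function.Bijective fun i : Fin (p.length + 1) => p.getVert i := by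
  refine ⟨fun a b h => Fin.ext (hp.getVert_injOn (by grind) (by grind) h), fun w => ?_⟩
  obtain ⟨i, hi, hil⟩ := mem_support_iff_exists_getVert.1 (hspan w)
  exact ⟨⟨i, by omega⟩, hi⟩

end Walk

theorem exists_iso_pathGraph_or_cycleGraph [Finite V] (hconn : G.Connected)
    (hdeg : G.MaxDegreeLeTwo) :
    (∃ n, Nonempty (G ≃g pathGraph n)) ∨ ∃ n, Nonempty (G ≃g cycleGraph n) := by
  classical
  have := Fintype.ofFinite V
  obtain ⟨x⟩ := hconn.nonempty
  have : Nonempty (Σ u v, G.Path u v) := ⟨⟨x, x, Path.nil⟩⟩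
  obtain ⟨⟨u, v, p, hp⟩, hmax⟩ := Finite.exists_max fun q : Σ u v, G.Path u v => q.2.2.1.length
  have hspan := hp.mem_support_of_forall_length_le hconn hdeg fun a b q hq => hmax ⟨a, b, q, hq⟩
  have iso {H : SimpleGraph (Fin (p.length + 1))}
      (hH : ∀ i j : Fin (p.length + 1), G.Adj (p.getVert i) (p.getVert j) ↔ H.Adj i j) :
      Nonempty (G ≃g H) :=
    ⟨(⟨Equiv.ofBijective _ (hp.getVert_bijective hspan), hH _ _⟩ : H ≃g G).symm⟩
  by_cases huv : G.Adj u v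
  · have hlen : 1 ≤ p.length := Nat.pos_of_ne_zero fun h => huv.ne (p.eq_of_length_eq_zero h)
    refine Or.inr ⟨_, iso fun i j => ?_⟩
    rw [hp.adj_getVert_iff hdeg i.is_le j.is_le, cycleGraph_adj_iff_pathGraph_adj (by omega),
      pathGraph_adj]
    simp only [huv, true_and]
    omega
  · refine Or.inl ⟨_, iso fun i j => ?_⟩
    rw [hp.adj_getVert_iff hdeg i.is_le j.is_le, pathGraph_adj]
    simp [huv]

end SimpleGraph

theorem stmt_13_general {V : Type} [Fintype V] (G : SimpleGraph V)
    (hclaw : ¬ Nonempty (claw ↪g G)) (hcoclaw : ¬ Nonempty (clawᶜ ↪g G))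
    (hconn : G.Connected)
    (hpath : Nonempty (pathGraph 6 ↪g G)) :
    (∃ n, 6 ≤ n ∧ Nonempty (G ≃g pathGraph n)) ∨
    (∃ n, 7 ≤ n ∧ Nonempty (G ≃g cycleGraph n)) := by
  obtain ⟨f⟩ := hpath
  have hdeg := maxDegreeLeTwo_of_cliqueFree_three hclaw
    (cliqueFree_three_of_pathGraph_six_embedding hclaw hcoclaw f)
  have hsix {n : ℕ} {H : SimpleGraph (Fin n)} (e : G ≃g H) : 6 ≤ n := by
    simpa using Fintype.card_le_of_embedding (e.toEmbedding.comp f).toEmbedding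
  rcases exists_iso_pathGraph_or_cycleGraph hconn hdeg with ⟨n, ⟨e⟩⟩ | ⟨n, ⟨e⟩⟩
  · exact Or.inl ⟨n, hsix e, ⟨e⟩⟩
  · refine Or.inr ⟨n, (hsix e).lt_of_ne ?_, ⟨e⟩⟩
    rintro rfl
    exact not_nonempty_pathGraph_six_embedding_cycleGraph_six ⟨e.toEmbedding.comp f⟩

/-- Step (2) of the proof of Theorem 1: a finite claw-free and co-claw-free graph, connected
with connected complement, containing an induced path on 6 vertices, is a path on at least 6
vertices or a cycle on at least 7 vertices. -/
theorem stmt_13 {V : Type} [Fintype V] (G : SimpleGraph V)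
    (hclaw : ¬ Nonempty (claw ↪g G)) (hcoclaw : ¬ Nonempty (clawᶜ ↪g G))
    (hconn : G.Connected) (hconnc : Gᶜ.Connected)
    (hpath : Nonempty (pathGraph 6 ↪g G)) :
    (∃ n, 6 ≤ n ∧ Nonempty (G ≃g pathGraph n)) ∨
    (∃ n, 7 ≤ n ∧ Nonempty (G ≃g cycleGraph n)) :=
  stmt_13_general G hclaw hcoclaw hconn hpath
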